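/- arXiv:2207.04514 — 6 statements merged into one kernel-verified Lean document; each statement's English description precedes it below -/
import Mathlib

section
/- Let x₁ ∈ (0,1) and define the sequence x_{n+1} = x_n(1 - x_n) for n ≥ 1. Then for all n ≥ 2, x_n < 1/(n - 1 + 1/x₁). -/
/-! Since `1 / (y (1 - y)) = 1 / y + 1 / (1 - y)` and `1 / (1 - y) > 1` on `(0, 1)`, each step of
the logistic map `y ↦ y (1 - y)` raises the reciprocal by more than `1`, so after `n - 1` steps
`1 / x n > 1 / x 1 + (n - 1)`. -/

open Set

lemma mul_one_sub_mem_Ioo {y : ℝ} (hy : y ∈ Ioo 0 1) : y * (1 - y) ∈ Ioo 0 1 :=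
  ⟨mul_pos hy.1 (sub_pos.2 hy.2), by nlinarith [hy.1, hy.2]⟩

lemma inv_add_one_lt_inv_mul_one_sub {y : ℝ} (hy : y ∈ Ioo 0 1) :
    y⁻¹ + 1 < (y * (1 - y))⁻¹ := by
  have h1y : 0 < 1 - y := sub_pos.2 hy.2
  have hsplit : (y * (1 - y))⁻¹ = y⁻¹ + (1 - y)⁻¹ := by
    field_simp [hy.1.ne', h1y.ne']
    ring
  rw [hsplit]
  gcongr
  exact one_lt_inv₀ h1y |>.2 (by linarith [hy.1])

section LogisticSequence

variable {x : ℕ → ℝ} (hrec : ∀ n ≥ 1, x (n + 1) = x n * (1 - x n))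
include hrec

lemma logistic_mem_Ioo (h1 : x 1 ∈ Ioo 0 1) {n : ℕ} (hn : 1 ≤ n) : x n ∈ Ioo 0 1 := by
  induction n, hn using Nat.le_induction with
  | base => exact h1
  | succ n hn ih => rw [hrec n hn]; exact mul_one_sub_mem_Ioo ih

lemma inv_add_lt_inv_logistic (h1 : x 1 ∈ Ioo 0 1) {n : ℕ} (hn : 2 ≤ n) :
    (x 1)⁻¹ + ((n : ℝ) - 1) < (x n)⁻¹ := by
  induction n, hn using Nat.le_induction with
  | base =>
    rw [hrec 1 le_rfl, Nat.cast_two, show (2 : ℝ) - 1 = 1 by norm_num]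
    exact inv_add_one_lt_inv_mul_one_sub h1
  | succ n hn ih =>
    have hstep := inv_add_one_lt_inv_mul_one_sub (logistic_mem_Ioo hrec h1 (by omega : 1 ≤ n))
    rw [hrec n (by omega)]
    push_cast
    linarith

end LogisticSequence

theorem stmt_5 (x : ℕ → ℝ) (h1 : x 1 ∈ Set.Ioo (0:ℝ) 1)
    (hrec : ∀ n ≥ 1, x (n + 1) = x n * (1 - x n)) :
    ∀ n ≥ 2, x n < 1 / ((n : ℝ) - 1 + 1 / x 1) := by
  intro n hn
  have hxn := logistic_mem_Ioo hrec h1 (by omega : 1 ≤ n)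
  have hden : 0 < (n : ℝ) - 1 + 1 / x 1 := by
    have : (2 : ℝ) ≤ n := by exact_mod_cast hn
    have : 0 < 1 / x 1 := one_div_pos.2 h1.1
    linarith
  rw [lt_one_div hxn.1 hden, one_div, one_div, add_comm]
  exact inv_add_lt_inv_logistic hrec h1 hn
end

section
/- Let x₁ ∈ (0,1), set f₁ = x₁(1 - x₁), and define x_{n+1} = x_n(1 - x_n). Then for every λ > 1 and all n ≥ 2, x_n ≥ 1/(φ + λn), where φ = max{λ/(λ-1), 1/f₁}. -/
theorem stmt_7 (x : ℕ → ℝ) (h1 : x 1 ∈ Set.Ioo (0:ℝ) 1)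
    (hrec : ∀ n ≥ 1, x (n + 1) = x n * (1 - x n)) :
    ∀ n ≥ 2, ∀ l : ℝ, 1 < l →
      x n ≥ 1 / (max (l / (l - 1)) (1 / (x 1 * (1 - x 1))) + l * n) := by
  obtain ⟨hx0, hx1⟩ := h1
  have hf : 0 < x 1 * (1 - x 1) := by nlinarith
  have hf4 : x 1 * (1 - x 1) ≤ 1/4 := by nlinarith [sq_nonneg (x 1 - 1/2)]
  have hpos : ∀ n ≥ 1, 0 < x n ∧ x n < 1 := by
    intro n hn
    induction n with
    | zero => omega
    | succ m ih =>
      rcases Nat.lt_or_ge 1 (m+1) with h | h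
      · have hm : m ≥ 1 := by omega
        obtain ⟨a, b⟩ := ih hm
        rw [hrec m hm]
        constructor <;> nlinarith
      · have hm0 : m = 0 := by omega
        subst hm0
        exact ⟨hx0, hx1⟩
  have hquarter : ∀ n ≥ 2, x n ≤ 1/4 := by
    intro n hn
    obtain ⟨m, rfl⟩ : ∃ m, n = m + 1 := ⟨n - 1, by omega⟩
    have hm : m ≥ 1 := by omega
    obtain ⟨a, b⟩ := hpos m hm
    rw [hrec m hm]
    nlinarith [sq_nonneg (x m - 1/2)]
  intro n hn l hl
  set φ := max (l / (l - 1)) (1 / (x 1 * (1 - x 1))) with hφ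
  have hφ1 : φ ≥ l / (l - 1) := le_max_left _ _
  have hφ2 : φ ≥ 1 / (x 1 * (1 - x 1)) := le_max_right _ _
  have hφ4 : φ ≥ 4 := by
    have : 1 / (x 1 * (1 - x 1)) ≥ 4 := by
      rw [ge_iff_le, le_div_iff₀ hf]; linarith
    linarith
  have hφl : φ * (l - 1) ≥ l := by
    have := (div_le_iff₀ (by linarith : (0:ℝ) < l - 1)).mp hφ1
    linarith
  induction n, hn using Nat.le_induction with
  | base =>
    have hx2 : x 2 = x 1 * (1 - x 1) := hrec 1 le_rfl
    rw [hx2, ge_iff_le, div_le_iff₀ (by push_cast; nlinarith)]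
    have := (div_le_iff₀ hf).mp hφ2
    push_cast
    nlinarith
  | succ n hn ih =>
    have hn2 : (n:ℝ) ≥ 2 := by exact_mod_cast hn
    have hc : φ + l * n ≥ 4 := by nlinarith
    have hcpos : (0:ℝ) < φ + l * n := by linarith
    have ha4 : 1 / (φ + l * n) ≤ 1/4 := by
      rw [div_le_iff₀ hcpos]; linarith
    have ha0 : 0 < 1 / (φ + l * n) := by positivity
    obtain ⟨hxp, hxl⟩ := hpos n (by omega)
    have hxq := hquarter n hn
    have hstep : x (n+1) ≥ (1 / (φ + l * n)) * (1 - 1 / (φ + l * n)) := by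
      rw [hrec n (by omega)]
      nlinarith [mul_nonneg (sub_nonneg.mpr ih)
        (by linarith : (0:ℝ) ≤ 1 - x n - 1 / (φ + l * n))]
    have heq : (1 / (φ + l * n)) * (1 - 1 / (φ + l * n))
        = (φ + l * n - 1) / (φ + l * n)^2 := by
      rw [eq_div_iff (by positivity)]
      field_simp
    have hfin : (φ + l * n - 1) / (φ + l * n)^2 ≥ 1 / (φ + l * (n+1)) := by
      rw [ge_iff_le, div_le_div_iff₀ (by nlinarith) (by positivity)]
      nlinarith
    rw [heq] at hstep
    push_cast at hfin ⊢
    linarith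
end

section
/- Let x₁ ∈ (0,1) and f₁ = x₁(1 - x₁). If n ≥ (1/f₁ - 1)², then the sequence defined by x_{k+1} = x_k(1 - x_k) satisfies x_n ≥ 1/(√n + 1)². -/
/-!
With `y k = 1 / x k` the recursion becomes `y (k+1) = y k + 1 + 1 / (y k - 1)`, and
`y 2 = 1 / f₁ ≥ 4`. Hence `y k ≥ k + 2`, so each increment exceeds `1` by at most
`1 / (k + 1) ≤ √(k+1) - √k` (for `k ≥ 3`), which gives `y k ≤ k + √k + (y 2 - 1)`.
When `√n ≥ 1 / f₁ - 1 = y 2 - 1` this is at most `n + 2√n < (√n + 1)²`.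
-/

open Real

lemma mul_one_sub_mem_Ioo_s8 {a : ℝ} (ha : a ∈ Set.Ioo (0 : ℝ) 1) :
    a * (1 - a) ∈ Set.Ioo (0 : ℝ) 1 := by
  obtain ⟨h0, h1⟩ := ha
  exact ⟨mul_pos h0 (by linarith), by nlinarith⟩

lemma four_le_one_div_mul_one_sub {a : ℝ} (ha : a ∈ Set.Ioo (0 : ℝ) 1) :
    4 ≤ 1 / (a * (1 - a)) := by
  rw [le_div_iff₀ (mul_one_sub_mem_Ioo_s8 ha).1]
  nlinarith [sq_nonneg (a - 1 / 2)]

lemma one_div_mul_one_sub_eq {a : ℝ} (h0 : a ≠ 0) (h1 : a ≠ 1) :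
    1 / (a * (1 - a)) = 1 / a + 1 + 1 / (1 / a - 1) := by
  have h1' : 1 - a ≠ 0 := sub_ne_zero.2 h1.symm
  rw [show 1 / a - 1 = (1 - a) / a by field_simp]
  field_simp
  ring

lemma one_div_add_one_le_sqrt_add_one_sub_sqrt {r : ℝ} (hr : 3 ≤ r) :
    1 / (r + 1) ≤ √(r + 1) - √r := by
  have hsq : √(r + 1) ^ 2 = r + 1 := sq_sqrt (by linarith)
  have hsq' : √r ^ 2 = r := sq_sqrt (by linarith)
  have h2 : 2 ≤ √(r + 1) := le_sqrt_of_sq_le (by linarith)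
  -- `√r ≤ (r + 1) / 2` by AM-GM and `√(r + 1) ≤ (r + 1) / 2` as `r + 1 ≥ 4`
  have hsum : √(r + 1) + √r ≤ r + 1 := by nlinarith [sq_nonneg (√r - 1)]
  have hdiff : √(r + 1) - √r = 1 / (√(r + 1) + √r) := by
    field_simp
    nlinarith
  rw [hdiff]
  exact one_div_le_one_div_of_le (by positivity) hsum

section ReciprocalRecursion

variable {y : ℕ → ℝ} (h2 : 4 ≤ y 2) (hstep : ∀ k ≥ 2, y (k + 1) = y k + 1 + 1 / (y k - 1))
include h2 hstep

lemma add_two_le_of_step : ∀ k : ℕ, 2 ≤ k → (k : ℝ) + 2 ≤ y k := by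
  intro k hk
  induction k, hk using Nat.le_induction with
  | base => norm_num; linarith
  | succ k hk ih =>
    have hinc : 0 < 1 / (y k - 1) := one_div_pos.2 (by linarith [(k.cast_nonneg : (0 : ℝ) ≤ k)])
    rw [hstep k hk]
    push_cast
    linarith

lemma le_add_sqrt_of_step : ∀ k : ℕ, 3 ≤ k → y k ≤ k + √k + (y 2 - 1) := by
  intro k hk
  induction k, hk using Nat.le_induction with
  | base =>
    have hinc : 1 / (y 2 - 1) ≤ 1 / 3 := one_div_le_one_div_of_le (by norm_num) (by linarith)
    rw [hstep 2 le_rfl]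
    push_cast
    linarith [sqrt_nonneg 3]
  | succ k hk ih =>
    have hk' : (3 : ℝ) ≤ k := by exact_mod_cast hk
    have hlow := add_two_le_of_step h2 hstep k (by omega)
    have hinc : 1 / (y k - 1) ≤ 1 / (k + 1) := one_div_le_one_div_of_le (by linarith) (by linarith)
    have hsqrt := one_div_add_one_le_sqrt_add_one_sub_sqrt hk'
    rw [hstep k (by omega)]
    push_cast
    linarith

end ReciprocalRecursion

theorem stmt_8 (x : ℕ → ℝ) (h1 : x 1 ∈ Set.Ioo (0:ℝ) 1)
    (hrec : ∀ k ≥ 1, x (k + 1) = x k * (1 - x k))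
    (n : ℕ) (hn : (n : ℝ) ≥ (1 / (x 1 * (1 - x 1)) - 1) ^ 2) :
    x n ≥ 1 / (Real.sqrt n + 1) ^ 2 := by
  have hx : ∀ k ≥ 1, x k ∈ Set.Ioo (0 : ℝ) 1 := by
    intro k hk
    induction k, hk using Nat.le_induction with
    | base => exact h1
    | succ k hk ih => rw [hrec k hk]; exact mul_one_sub_mem_Ioo_s8 ih
  set y : ℕ → ℝ := fun k => 1 / x k
  have hy2 : y 2 = 1 / (x 1 * (1 - x 1)) := by simp only [y, hrec 1 le_rfl]
  have h4 : 4 ≤ y 2 := hy2 ▸ four_le_one_div_mul_one_sub h1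
  have hstep : ∀ k ≥ 2, y (k + 1) = y k + 1 + 1 / (y k - 1) := fun k hk => by
    obtain ⟨hpos, hlt⟩ := hx k (by omega)
    simp only [y, hrec k (by omega)]
    exact one_div_mul_one_sub_eq hpos.ne' hlt.ne
  have hsqrt : y 2 - 1 ≤ √n := le_sqrt_of_sq_le (hy2 ▸ hn)
  have hn3 : 3 ≤ n := by
    have : (3 : ℝ) ≤ n := by nlinarith [sq_sqrt n.cast_nonneg, sqrt_nonneg n]
    exact_mod_cast this
  have hyn : y n ≤ (√n + 1) ^ 2 := by
    nlinarith [le_add_sqrt_of_step h4 hstep n hn3, sq_sqrt n.cast_nonneg]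
  calc 1 / (√n + 1) ^ 2 ≤ 1 / y n :=
      one_div_le_one_div_of_le (one_div_pos.2 (hx n (by omega)).1) hyn
    _ = x n := one_div_one_div (x n)
end

section
/- Let x₁ ∈ (0,1), a ∈ (0,1], and define x_{n+1} = x_n(1 - a·x_n). Then for all n ≥ 1, a·(x₁ + x₂ + ⋯ + x_n) ≤ a·x₁ + log(1 + (n-1)·x₁). -/
/-!
Since `(1 - a y) (1 + a y) ≤ 1`, each step of the iteration raises `1 / x n` by at least `a`, so
`1 / x (n + 1) ≥ 1 / x 1 + n a` and, as `a ≤ 1`, `a x (n + 1) ≤ x 1 / (1 + n x 1)`. By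
`log u - log v ≥ (u - v) / u` this is at most `log (1 + n x 1) - log (1 + (n - 1) x 1)`, and these
increments telescope.
-/

open Real Finset

lemma div_le_log_sub_log {u v : ℝ} (hu : 0 < u) (hv : 0 < v) : (u - v) / u ≤ log u - log v := by
  have h := one_sub_inv_le_log_of_pos (div_pos hu hv)
  rwa [log_div hu.ne' hv.ne', inv_div, one_sub_div hu.ne'] at h

lemma inv_add_le_inv_mul_one_sub_mul {a y : ℝ} (hy : 0 < y) (hay : a * y < 1) :
    y⁻¹ + a ≤ (y * (1 - a * y))⁻¹ := by
  have h1 : 0 < 1 - a * y := by linarith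
  rw [← one_div, ← one_div, div_add' _ _ _ hy.ne', div_le_div_iff₀ hy (mul_pos hy h1)]
  nlinarith [sq_nonneg (a * y)]

section Logistic

variable {a : ℝ} {x : ℕ → ℝ}

lemma logistic_pos_and_mul_lt_one (ha : 0 < a) (hx1 : 0 < x 1) (hax1 : a * x 1 < 1)
    (hrec : ∀ n ≥ 1, x (n + 1) = x n * (1 - a * x n)) : ∀ n ≥ 1, 0 < x n ∧ a * x n < 1 := by
  intro n hn
  induction n, hn using Nat.le_induction with
  | base => exact ⟨hx1, hax1⟩
  | succ n hn ih =>
    obtain ⟨hpos, hlt⟩ := ih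
    rw [hrec n hn]
    refine ⟨mul_pos hpos (by linarith), ?_⟩
    nlinarith [mul_pos ha hpos]

lemma logistic_inv_add_le_inv (ha : 0 < a) (hx1 : 0 < x 1) (hax1 : a * x 1 < 1)
    (hrec : ∀ n ≥ 1, x (n + 1) = x n * (1 - a * x n)) (n : ℕ) :
    (x 1)⁻¹ + n * a ≤ (x (n + 1))⁻¹ := by
  induction n with
  | zero => simp
  | succ n ih =>
    obtain ⟨hpos, hlt⟩ := logistic_pos_and_mul_lt_one ha hx1 hax1 hrec (n + 1) (by omega)
    rw [hrec (n + 1) (by omega)]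
    push_cast
    linarith [inv_add_le_inv_mul_one_sub_mul hpos hlt]

lemma mul_logistic_le (ha : 0 < a) (ha1 : a ≤ 1) (hx1 : 0 < x 1) (hax1 : a * x 1 < 1)
    (hrec : ∀ n ≥ 1, x (n + 1) = x n * (1 - a * x n)) (n : ℕ) :
    a * x (n + 1) ≤ x 1 / (1 + n * x 1) := by
  have hinv := logistic_inv_add_le_inv ha hx1 hax1 hrec n
  obtain ⟨hpos, -⟩ := logistic_pos_and_mul_lt_one ha hx1 hax1 hrec (n + 1) (by omega)
  have hn : (0 : ℝ) ≤ n := n.cast_nonneg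
  rw [le_div_iff₀ (by positivity)]
  rw [← one_div, ← one_div, div_add' _ _ _ hx1.ne', div_le_div_iff₀ hx1 hpos] at hinv
  nlinarith [mul_nonneg (mul_nonneg hn hx1.le) (mul_nonneg (sub_nonneg.2 ha1) hpos.le),
    mul_nonneg (sub_nonneg.2 ha1) hpos.le]

end Logistic

theorem stmt_9 (a : ℝ) (ha : 0 < a) (ha1 : a ≤ 1) (x : ℕ → ℝ)
    (h1 : x 1 ∈ Set.Ioo (0:ℝ) 1)
    (hrec : ∀ n ≥ 1, x (n + 1) = x n * (1 - a * x n)) :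
    ∀ n ≥ 1, a * (∑ i ∈ Finset.Icc 1 n, x i) ≤ a * x 1 + Real.log (1 + ((n : ℝ) - 1) * x 1) := by
  obtain ⟨hx1, hx1_lt⟩ := h1
  have hax1 : a * x 1 < 1 := by nlinarith
  intro n hn
  induction n, hn using Nat.le_induction with
  | base => simp
  | succ n hn ih =>
    have hn' : (1 : ℝ) ≤ n := by exact_mod_cast hn
    have hstep : a * x (n + 1) ≤ log (1 + n * x 1) - log (1 + (n - 1) * x 1) :=
      calc a * x (n + 1) ≤ x 1 / (1 + n * x 1) := mul_logistic_le ha ha1 hx1 hax1 hrec n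
        _ = ((1 + n * x 1) - (1 + (n - 1) * x 1)) / (1 + n * x 1) := by ring
        _ ≤ _ := div_le_log_sub_log (by positivity) (by nlinarith)
    rw [sum_Icc_succ_top (by omega), mul_add, Nat.cast_succ, add_sub_cancel_right]
    linarith
end

section
/- For every r ∈ (0,1), the function g(r) = (1 - 1/(1 - e^{-r} - r/10))·r - log(e^{-r} + r/10) satisfies g(r) < 0 for all r ∈ (0,1). -/
/-!
Write `u = e^{-r} + r/10`. Since `log (u / e^{-r}) ≥ 1 - e^{-r}/u`, we get
`log u ≥ -r + r/(10u)`, so `g(r) ≤ r (2 - 1/(1-u) - 1/(10u))`. The bracket is negative as soon as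
`20u² - 11u + 1 > 0` and `u < 1`, which holds because `9/20 ≤ u < 1` for `r ∈ (0,1)`.
-/

open Real

/-- The tangent line of `exp (-r)` at `r = 1`. -/
lemma exp_neg_one_mul_two_sub_le_exp_neg (r : ℝ) : exp (-1) * (2 - r) ≤ exp (-r) :=
  calc exp (-1) * (2 - r) = exp (-1) * ((1 - r) + 1) := by ring
    _ ≤ exp (-1) * exp (1 - r) := by gcongr; exact add_one_le_exp _
    _ = exp (-r) := by rw [← exp_add]; ring_nf

lemma nine_div_twenty_le_exp_neg_add_div_ten {r : ℝ} (hr : r ≤ 1) :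
    9 / 20 ≤ exp (-r) + r / 10 := by
  have he := exp_neg_one_gt_d9
  nlinarith [exp_neg_one_mul_two_sub_le_exp_neg r]

lemma exp_neg_add_div_ten_lt_one {r : ℝ} (h0 : 0 < r) (h9 : r ≤ 9) :
    exp (-r) + r / 10 < 1 := by
  have hmul : exp (-r) * exp r = 1 := by rw [← exp_add, neg_add_cancel, exp_zero]
  have hexp : r + 1 < exp r := add_one_lt_exp h0.ne'
  nlinarith [exp_pos (-r)]

lemma neg_add_div_le_log_exp_neg_add {r c : ℝ} (h : 0 < exp (-r) + c) :
    -r + c / (exp (-r) + c) ≤ log (exp (-r) + c) := by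
  have hlog := one_sub_inv_le_log_of_pos (div_pos h (exp_pos (-r)))
  rw [log_div h.ne' (exp_pos _).ne', log_exp, inv_div] at hlog
  have hfrac : c / (exp (-r) + c) = 1 - exp (-r) / (exp (-r) + c) := by
    field_simp
    ring
  linarith

lemma two_lt_one_div_one_sub_add_one_div_ten_mul {u : ℝ} (h1 : 9 / 20 ≤ u) (h2 : u < 1) :
    2 < 1 / (1 - u) + 1 / (10 * u) := by
  have hu : 0 < u := by linarith
  have hsub : 0 < 1 - u := by linarith
  rw [div_add_div _ _ hsub.ne' (by positivity), lt_div_iff₀ (by positivity)]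
  nlinarith

theorem stmt_16 (r : ℝ) (hr : r ∈ Set.Ioo (0:ℝ) 1) :
    (1 - 1 / (1 - Real.exp (-r) - r / 10)) * r - Real.log (Real.exp (-r) + r / 10) < 0 := by
  obtain ⟨h0, h1⟩ := hr
  have hlo := nine_div_twenty_le_exp_neg_add_div_ten h1.le
  have hhi := exp_neg_add_div_ten_lt_one h0 (by linarith)
  have hlog := neg_add_div_le_log_exp_neg_add (r := r) (c := r / 10) (by linarith)
  have hkey := two_lt_one_div_one_sub_add_one_div_ten_mul hlo hhi
  set u := exp (-r) + r / 10
  have hu : 0 < u := by linarith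
  have hsub : 1 - exp (-r) - r / 10 = 1 - u := by ring
  rw [hsub]
  calc (1 - 1 / (1 - u)) * r - log u ≤ (1 - 1 / (1 - u)) * r - (-r + r / 10 / u) := by linarith
    _ = r * (2 - (1 / (1 - u) + 1 / (10 * u))) := by field_simp; ring
    _ < 0 := mul_neg_of_pos_of_neg h0 (by linarith)
end

section
/- Fix ρ ∈ (0,1) and let γ = 1 - ρ. The function f(c) = c/γ - c·log c + (ρ/γ)·log(1 - c) has a unique root c* in (0,1), and f(c) < 0 for all c ∈ (c*, 1). -/
/-!
On `[0, 1)` the function `f` is strictly concave: it is `-c log c` plus a linear term plus a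
nonnegative multiple of the concave `log (1 - c)`. Since `f 0 = 0`, as soon as `f` vanishes at some
`a > 0` it is negative on `(a, 1)`; this gives both uniqueness of the root and the sign beyond it.
A root exists by the intermediate value theorem, because `f (1 - ρ) > 0` and `f → -∞` at `1`.
-/

open Real Set Filter Topology

lemma StrictConcaveOn.lt_right_of_le_left {s : Set ℝ} {g : ℝ → ℝ} (hg : StrictConcaveOn ℝ s g)
    {x a c : ℝ} (hx : x ∈ s) (hc : c ∈ s) (hxa : x < a) (hac : a < c) (hle : g a ≤ g x) :
    g c < g a := by
  have hleft : (g a - g x) / (a - x) ≤ 0 :=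
    div_nonpos_of_nonpos_of_nonneg (sub_nonpos.2 hle) (sub_nonneg.2 hxa.le)
  have := (div_lt_iff₀ (sub_pos.2 hac)).1 ((hg.slope_anti_adjacent hx hc hxa hac).trans_le hleft)
  linarith

lemma concaveOn_log_one_sub : ConcaveOn ℝ (Iio 1) (fun c : ℝ => log (1 - c)) := by
  have := strictConcaveOn_log_Ioi.concaveOn.comp_affineMap
    (AffineMap.const ℝ ℝ (1 : ℝ) - AffineMap.id ℝ ℝ)
  have hpre : ⇑(AffineMap.const ℝ ℝ (1 : ℝ) - AffineMap.id ℝ ℝ) ⁻¹' Ioi 0 = Iio 1 := by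
    ext c; simp
  rwa [hpre] at this

namespace LogRoot

noncomputable def f (ρ c : ℝ) : ℝ := c / (1 - ρ) - c * log c + ρ / (1 - ρ) * log (1 - c)

lemma f_zero (ρ : ℝ) : f ρ 0 = 0 := by simp [f]

lemma strictConcaveOn_f {ρ : ℝ} (hρ : ρ ∈ Icc (0 : ℝ) 1) :
    StrictConcaveOn ℝ (Ico 0 1) (f ρ) := by
  have hlin : ConcaveOn ℝ (Ico 0 1) (fun c : ℝ => c / (1 - ρ)) :=
    (LinearMap.lsmul ℝ ℝ (1 - ρ)⁻¹).concaveOn (convex_Ico 0 1) |>.congr fun c _ => by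
      simp [div_eq_inv_mul]
  have hlog := (concaveOn_log_one_sub.subset (fun c hc => hc.2) (convex_Ico 0 1)).smul
    (div_nonneg hρ.1 (sub_nonneg.2 hρ.2))
  have := (strictConcaveOn_negMulLog.subset Ico_subset_Ici_self (convex_Ico 0 1)).add_concaveOn
    (hlin.add hlog)
  have heq : f ρ = negMulLog + ((fun c => c / (1 - ρ)) + fun c => (ρ / (1 - ρ)) • log (1 - c)) := by
    funext c; simp only [f, Pi.add_apply, negMulLog, smul_eq_mul]; ring
  rwa [heq]

lemma f_neg_of_f_eq_zero {ρ a c : ℝ} (hρ : ρ ∈ Icc (0 : ℝ) 1) (ha : 0 < a) (hfa : f ρ a = 0)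
    (hc : c ∈ Ioo a 1) : f ρ c < 0 := by
  have := (strictConcaveOn_f hρ).lt_right_of_le_left (x := 0) ⟨le_rfl, by linarith [hc.2]⟩
    ⟨by linarith [hc.1], hc.2⟩ ha hc.1 (by rw [hfa, f_zero])
  rwa [hfa] at this

lemma eq_of_f_eq_zero {ρ a b : ℝ} (hρ : ρ ∈ Icc (0 : ℝ) 1) (ha : a ∈ Ioo (0 : ℝ) 1)
    (hb : b ∈ Ioo (0 : ℝ) 1) (hfa : f ρ a = 0) (hfb : f ρ b = 0) : a = b := by
  by_contra hne
  rcases lt_or_gt_of_ne hne with hab | hba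
  · exact (f_neg_of_f_eq_zero hρ ha.1 hfa ⟨hab, hb.2⟩).ne hfb
  · exact (f_neg_of_f_eq_zero hρ hb.1 hfb ⟨hba, ha.2⟩).ne hfa

lemma f_one_sub_pos {ρ : ℝ} (hρ : ρ ∈ Ioo (0 : ℝ) 1) : 0 < f ρ (1 - ρ) := by
  obtain ⟨hρ0, hρ1⟩ := hρ
  have hγ : 0 < 1 - ρ := sub_pos.2 hρ1
  have hlog : ρ / (1 - ρ) * (1 - ρ⁻¹) ≤ ρ / (1 - ρ) * log ρ :=
    mul_le_mul_of_nonneg_left (one_sub_inv_le_log_of_pos hρ0) (by positivity)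
  have hent : 0 < -((1 - ρ) * log (1 - ρ)) :=
    neg_pos.2 (mul_neg_of_pos_of_neg hγ (log_neg hγ (by linarith)))
  have : ρ / (1 - ρ) * (1 - ρ⁻¹) = -1 := by field_simp; ring
  simp only [f, sub_sub_cancel, div_self hγ.ne']
  linarith

lemma tendsto_f_nhdsLT_one {ρ : ℝ} (hρ : ρ ∈ Ioo (0 : ℝ) 1) :
    Tendsto (f ρ) (𝓝[<] 1) atBot := by
  have hlog : Tendsto (fun c : ℝ => log (1 - c)) (𝓝[<] 1) atBot := by
    refine tendsto_log_nhdsGT_zero.comp (tendsto_nhdsWithin_iff.2 ⟨?_, ?_⟩)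
    · exact ((continuous_const.sub continuous_id).tendsto' 1 0 (sub_self 1)).mono_left
        nhdsWithin_le_nhds
    · exact eventually_nhdsWithin_of_forall fun c hc => sub_pos.2 (mem_Iio.1 hc)
  have hrest : Tendsto (fun c : ℝ => c / (1 - ρ) - c * log c) (𝓝[<] 1)
      (𝓝 (1 / (1 - ρ) - 1 * log 1)) :=
    ((Continuous.continuousAt (by fun_prop)).tendsto).mono_left nhdsWithin_le_nhds
  exact hrest.add_atBot (hlog.const_mul_atBot (div_pos hρ.1 (sub_pos.2 hρ.2)))

lemma continuousOn_f (ρ : ℝ) : ContinuousOn (f ρ) (Ioo 0 1) := by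
  unfold f
  fun_prop (disch := intro x hx; first | exact hx.1.ne' | exact (sub_pos.2 hx.2).ne')

end LogRoot

open LogRoot

theorem stmt_18 (ρ : ℝ) (hρ : ρ ∈ Set.Ioo (0:ℝ) 1) :
    ∃ cstar ∈ Set.Ioo (0:ℝ) 1,
      (cstar / (1 - ρ) - cstar * Real.log cstar + (ρ / (1 - ρ)) * Real.log (1 - cstar) = 0) ∧
      (∀ c ∈ Set.Ioo (0:ℝ) 1,
        c / (1 - ρ) - c * Real.log c + (ρ / (1 - ρ)) * Real.log (1 - c) = 0 → c = cstar) ∧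
      (∀ c ∈ Set.Ioo cstar 1,
        c / (1 - ρ) - c * Real.log c + (ρ / (1 - ρ)) * Real.log (1 - c) < 0) := by
  have hρ' : ρ ∈ Icc (0 : ℝ) 1 := Ioo_subset_Icc_self hρ
  have hγ : 1 - ρ ∈ Ioo (0 : ℝ) 1 := ⟨sub_pos.2 hρ.2, by linarith [hρ.1]⟩
  obtain ⟨b, hfb, hγb, hb1⟩ : ∃ b, f ρ b < 0 ∧ 1 - ρ < b ∧ b < 1 :=
    ((tendsto_f_nhdsLT_one hρ).eventually (eventually_lt_atBot 0)).and
      (Ioo_mem_nhdsLT hγ.2) |>.exists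
  obtain ⟨cstar, hcs, hroot⟩ := intermediate_value_Icc' hγb.le
    ((continuousOn_f ρ).mono (Icc_subset_Ioo hγ.1 hb1)) ⟨hfb.le, (f_one_sub_pos hρ).le⟩
  have hcs01 : cstar ∈ Ioo (0 : ℝ) 1 := ⟨hγ.1.trans_le hcs.1, hcs.2.trans_lt hb1⟩
  exact ⟨cstar, hcs01, hroot, fun c hc hfc => eq_of_f_eq_zero hρ' hc hcs01 hfc hroot,
    fun c hc => f_neg_of_f_eq_zero hρ' hcs01.1 hroot hc⟩
end
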